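/- Let f₁, f₂ : ℝ^d → ℝ^d be Lipschitz continuous with Lipschitz constants L₁ and L₂, with ‖f₁(z) − f₂(z)‖ ≤ μ for all z ∈ ℝ^d for some μ > 0. Let 0 < T₁ < t̆ ≤ T₂ with t̆ − T₁ ≤ η for some η > 0. Let x, x̃ : [T₁, T₂] → ℝ^d be continuous with x(T₁) = x̃(T₁), x′(t) = f₂(x(t)) for t ∈ (T₁, T₂], x̃′(t) = f₁(x̃(t)) for t ∈ (T₁, t̆] and x̃′(t) = f₂(x̃(t)) for t ∈ (t̆, T₂]. Then for every t ∈ (t̆, T₂], ‖x(t) − x̃(t)‖ ≤ μ η exp(L₂(t − t̆) + max(L₁, L₂) η), where ‖·‖ is the Euclidean norm on ℝ^d. -/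

import Mathlib

/-!
On `(T₁, t̆]` the difference `x - x̃` starts at `0` and its derivative
`(f₂ x - f₂ x̃) + (f₂ x̃ - f₁ x̃)` has norm at most `L₂ ‖x - x̃‖ + μ`, so Grönwall gives
`‖x t̆ - x̃ t̆‖ ≤ μ (t̆ - T₁) exp (L₂ (t̆ - T₁)) ≤ μ η exp (max L₁ L₂ η)`. After `t̆` both curves
follow `f₂`, and Grönwall without forcing term multiplies this gap by `exp (L₂ (t - t̆))`.
Neither step has a right derivative at its left endpoint (none is given at `T₁`, and at `t̆`
the derivative of `x̃` is `f₁ x̃`), so Grönwall is used in a form needing derivatives only on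
the open interval, obtained by letting the starting time tend to the endpoint.
-/

open Set Filter Topology Real

lemma nonneg_of_norm_sub_le_mul {E F : Type*} [NormedAddCommGroup E] [Nontrivial E]
    [SeminormedAddCommGroup F] {f : E → F} {L : ℝ} (hf : ∀ u v, ‖f u - f v‖ ≤ L * ‖u - v‖) :
    0 ≤ L := by
  obtain ⟨u, v, huv⟩ := exists_pair_ne E
  exact nonneg_of_mul_nonneg_left ((norm_nonneg _).trans (hf u v))
    (norm_pos_iff.2 (sub_ne_zero.2 huv))

variable {E : Type*} [NormedAddCommGroup E] [NormedSpace ℝ E]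

lemma gronwallBound_le_gronwallBound_of_le {δ δ' K ε x : ℝ} (h : δ ≤ δ') :
    gronwallBound δ K ε x ≤ gronwallBound δ' K ε x := by
  unfold gronwallBound
  split_ifs <;> gcongr

lemma continuous_gronwallBound (K ε : ℝ) :
    Continuous fun p : ℝ × ℝ => gronwallBound p.1 K ε p.2 := by
  unfold gronwallBound
  split_ifs <;> fun_prop

lemma Real.exp_sub_one_le_mul_exp (u : ℝ) : exp u - 1 ≤ u * exp u := by
  have h := mul_le_mul_of_nonneg_left (add_one_le_exp (-u)) (exp_pos u).le
  rw [← exp_add, add_neg_cancel, exp_zero] at h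
  linarith

lemma gronwallBound_zero_le {K ε x : ℝ} (hK : 0 ≤ K) (hε : 0 ≤ ε) :
    gronwallBound 0 K ε x ≤ ε * x * exp (K * x) := by
  rcases hK.eq_or_lt with rfl | hK
  · simp [gronwallBound_K0]
  · simp only [gronwallBound, hK.ne', if_false, zero_mul, zero_add]
    rw [div_mul_eq_mul_div, div_le_iff₀ hK]
    nlinarith [Real.exp_sub_one_le_mul_exp (K * x)]

theorem norm_le_gronwallBound_of_hasDerivAt_Ioo {f f' : ℝ → E} {δ K ε a b : ℝ}
    (hf : ContinuousOn f (Icc a b)) (hf' : ∀ t ∈ Ioo a b, HasDerivAt f (f' t) t)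
    (ha : ‖f a‖ ≤ δ) (bound : ∀ t ∈ Ioo a b, ‖f' t‖ ≤ K * ‖f t‖ + ε) :
    ∀ t ∈ Icc a b, ‖f t‖ ≤ gronwallBound δ K ε (t - a) := by
  rintro t ⟨hat, htb⟩
  rcases hat.eq_or_lt with rfl | hat
  · simpa [gronwallBound_x0] using ha
  have from_later_start : ∀ s ∈ Ioo a t, ‖f t‖ ≤ gronwallBound ‖f s‖ K ε (t - s) := by
    intro s hs
    have hsub : Ico s t ⊆ Ioo a b := fun r hr => ⟨hs.1.trans_le hr.1, hr.2.trans_le htb⟩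
    exact norm_le_gronwallBound_of_norm_deriv_right_le
      (hf.mono (Icc_subset_Icc hs.1.le htb)) (fun r hr => (hf' r (hsub hr)).hasDerivWithinAt)
      le_rfl (fun r hr => bound r (hsub hr)) t ⟨hs.2.le, le_rfl⟩
  have hf_lim : Tendsto f (𝓝[Ioo a t] a) (𝓝 (f a)) :=
    (hf.continuousWithinAt ⟨le_rfl, hat.le.trans htb⟩).mono_left
      (nhdsWithin_mono a fun r hr => ⟨hr.1.le, hr.2.le.trans htb⟩)
  have bound_lim : Tendsto (fun s => gronwallBound ‖f s‖ K ε (t - s)) (𝓝[Ioo a t] a)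
      (𝓝 (gronwallBound ‖f a‖ K ε (t - a))) :=
    ((continuous_gronwallBound K ε).tendsto _).comp
      (hf_lim.norm.prodMk_nhds (tendsto_nhdsWithin_of_tendsto_nhds
        ((continuous_const.sub continuous_id).tendsto a)))
  have := left_nhdsWithin_Ioo_neBot hat
  calc ‖f t‖ ≤ gronwallBound ‖f a‖ K ε (t - a) :=
        ge_of_tendsto bound_lim (eventually_mem_nhdsWithin.mono from_later_start)
    _ ≤ gronwallBound δ K ε (t - a) := gronwallBound_le_gronwallBound_of_le ha

theorem norm_sub_le_gronwallBound_of_hasDerivAt_Ioo {f g : E → E} {x y : ℝ → E}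
    {L μ δ a b : ℝ} (hf : ∀ u v, ‖f u - f v‖ ≤ L * ‖u - v‖) (hfg : ∀ z, ‖g z - f z‖ ≤ μ)
    (hx : ContinuousOn x (Icc a b)) (hy : ContinuousOn y (Icc a b))
    (hx' : ∀ t ∈ Ioo a b, HasDerivAt x (f (x t)) t)
    (hy' : ∀ t ∈ Ioo a b, HasDerivAt y (g (y t)) t) (ha : ‖x a - y a‖ ≤ δ) :
    ∀ t ∈ Icc a b, ‖x t - y t‖ ≤ gronwallBound δ L μ (t - a) := by
  refine norm_le_gronwallBound_of_hasDerivAt_Ioo (hx.sub hy)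
    (fun t ht => (hx' t ht).sub (hy' t ht)) ha fun t _ => ?_
  calc ‖f (x t) - g (y t)‖ = ‖(f (x t) - f (y t)) + (f (y t) - g (y t))‖ := by
        rw [sub_add_sub_cancel]
    _ ≤ L * ‖x t - y t‖ + μ :=
        (norm_add_le _ _).trans (add_le_add (hf _ _) (norm_sub_rev (g _) _ ▸ hfg _))

theorem switched_system_comparison_third_case_general
    {d : ℕ}
    (f₁ f₂ : EuclideanSpace ℝ (Fin d) → EuclideanSpace ℝ (Fin d))
    (L₁ L₂ μ η T₁ T₂ tb : ℝ)
    (hf₂ : ∀ a b, ‖f₂ a - f₂ b‖ ≤ L₂ * ‖a - b‖)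
    (hdiff : ∀ z, ‖f₁ z - f₂ z‖ ≤ μ)
    (hT₁tb : T₁ < tb) (htbT₂ : tb ≤ T₂)
    (htbη : tb - T₁ ≤ η)
    (x xt : ℝ → EuclideanSpace ℝ (Fin d))
    (hxc : ContinuousOn x (Set.Icc T₁ T₂))
    (hxtc : ContinuousOn xt (Set.Icc T₁ T₂))
    (hinit : x T₁ = xt T₁)
    (hx : ∀ t ∈ Set.Ioc T₁ T₂, HasDerivAt x (f₂ (x t)) t)
    (hxt1 : ∀ t ∈ Set.Ioc T₁ tb, HasDerivAt xt (f₁ (xt t)) t)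
    (hxt2 : ∀ t ∈ Set.Ioc tb T₂, HasDerivAt xt (f₂ (xt t)) t) :
    ∀ t ∈ Set.Ioc tb T₂,
      ‖x t - xt t‖ ≤ μ * η * Real.exp (L₂ * (t - tb) + max L₁ L₂ * η) := by
  rintro t ⟨htbt, htT₂⟩
  have hμ : 0 ≤ μ := (norm_nonneg _).trans (hdiff 0)
  have hη : 0 ≤ η := by linarith
  rcases subsingleton_or_nontrivial (EuclideanSpace ℝ (Fin d)) with hE | hE
  · rw [Subsingleton.elim (x t) (xt t), sub_self, norm_zero]
    exact mul_nonneg (mul_nonneg hμ hη) (exp_pos _).le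
  have hL₂ : 0 ≤ L₂ := nonneg_of_norm_sub_le_mul hf₂
  have gap_at_tb : ‖x tb - xt tb‖ ≤ μ * η * exp (max L₁ L₂ * η) :=
    calc ‖x tb - xt tb‖ ≤ gronwallBound 0 L₂ μ (tb - T₁) :=
          norm_sub_le_gronwallBound_of_hasDerivAt_Ioo hf₂ hdiff
            (hxc.mono (Icc_subset_Icc_right htbT₂)) (hxtc.mono (Icc_subset_Icc_right htbT₂))
            (fun s hs => hx s ⟨hs.1, hs.2.le.trans htbT₂⟩)
            (fun s hs => hxt1 s (Ioo_subset_Ioc_self hs))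
            (by rw [hinit, sub_self, norm_zero]) tb ⟨hT₁tb.le, le_rfl⟩
      _ ≤ μ * (tb - T₁) * exp (L₂ * (tb - T₁)) := gronwallBound_zero_le hL₂ hμ
      _ ≤ μ * η * exp (max L₁ L₂ * η) := by gcongr; exact le_max_right _ _
  calc ‖x t - xt t‖ ≤ gronwallBound (μ * η * exp (max L₁ L₂ * η)) L₂ 0 (t - tb) :=
        norm_sub_le_gronwallBound_of_hasDerivAt_Ioo hf₂ (fun z => by simp)
          (hxc.mono (Icc_subset_Icc hT₁tb.le htT₂)) (hxtc.mono (Icc_subset_Icc hT₁tb.le htT₂))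
          (fun s hs => hx s ⟨hT₁tb.trans hs.1, hs.2.le.trans htT₂⟩)
          (fun s hs => hxt2 s ⟨hs.1, hs.2.le.trans htT₂⟩) gap_at_tb t ⟨htbt.le, le_rfl⟩
    _ = μ * η * exp (L₂ * (t - tb) + max L₁ L₂ * η) := by
        rw [gronwallBound_ε0, exp_add]; ring

/-- Third case of the switched-system comparison bound: after the approximate
switching time `t̆`, the gap accumulated on the mismatch interval `(T₁, t̆]` is
amplified by at most `exp (L₂ (t - t̆))`, giving
`‖x t - x̃ t‖ ≤ μ η exp (L₂ (t - t̆) + max L₁ L₂ * η)`. -/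
theorem switched_system_comparison_third_case
    {d : ℕ}
    (f₁ f₂ : EuclideanSpace ℝ (Fin d) → EuclideanSpace ℝ (Fin d))
    (L₁ L₂ μ η T₁ T₂ tb : ℝ)
    (hf₁ : ∀ a b, ‖f₁ a - f₁ b‖ ≤ L₁ * ‖a - b‖)
    (hf₂ : ∀ a b, ‖f₂ a - f₂ b‖ ≤ L₂ * ‖a - b‖)
    (hμ : 0 < μ) (hη : 0 < η)
    (hdiff : ∀ z, ‖f₁ z - f₂ z‖ ≤ μ)
    (hT₁pos : 0 < T₁) (hT₁tb : T₁ < tb) (htbT₂ : tb ≤ T₂)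
    (htbη : tb - T₁ ≤ η)
    (x xt : ℝ → EuclideanSpace ℝ (Fin d))
    (hxc : ContinuousOn x (Set.Icc T₁ T₂))
    (hxtc : ContinuousOn xt (Set.Icc T₁ T₂))
    (hinit : x T₁ = xt T₁)
    (hx : ∀ t ∈ Set.Ioc T₁ T₂, HasDerivAt x (f₂ (x t)) t)
    (hxt1 : ∀ t ∈ Set.Ioc T₁ tb, HasDerivAt xt (f₁ (xt t)) t)
    (hxt2 : ∀ t ∈ Set.Ioc tb T₂, HasDerivAt xt (f₂ (xt t)) t) :
    ∀ t ∈ Set.Ioc tb T₂,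
      ‖x t - xt t‖ ≤ μ * η * Real.exp (L₂ * (t - tb) + max L₁ L₂ * η) :=
  switched_system_comparison_third_case_general f₁ f₂ L₁ L₂ μ η T₁ T₂ tb hf₂ hdiff hT₁tb htbT₂ htbη
    x xt hxc hxtc hinit hx hxt1 hxt2
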